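/- Let Σ : ℝⁿ × ℝⁿ → ℝ be of class C³, fix x' ∈ ℝⁿ, and suppose that for all x the n×n matrix S(x) with entries S_{ip} = ∂²Σ/∂xⁱ∂x'ᵖ(x,x') is invertible. Let c be a symmetric invertible n×n real matrix and define H(x) = S(x) · c · S(x)ᵀ, i.e. H_{ik}(x) = Σ_{p,q} Σ_{ip'}(x,x') c^{pq} Σ_{kq'}(x,x'). Then H(x) is a symmetric invertible matrix for every x, and the Christoffel symbol Γⁱ_{kl}(x,x') = Σ_s Σ^{is'} ∂³Σ/∂xᵏ∂xˡ∂x'ˢ coincides with the Levi-Civita Christoffel symbol of the metric H: Γⁱ_{kl}(x,x') = ½ Σ_m (H(x)⁻¹)^{im} (∂H_{km}/∂xˡ + ∂H_{lm}/∂xᵏ − ∂H_{kl}/∂xᵐ) for all x and all indices i,k,l. (The tensor G̃_{(x')ik} = Σ_{ip'} g̃^{p'q'} Σ_{kq'} solves the Christoffel system for the flat Euclidean space Ẽ_{x'}.) -/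

import Mathlib

open Matrix

/-- Partial derivative `∂f/∂xⁱ` of a function `f : ℝⁿ → ℝ` at the point `x`. -/
noncomputable def pd (n : ℕ) (i : Fin n) (f : (Fin n → ℝ) → ℝ) (x : Fin n → ℝ) : ℝ :=
  fderiv ℝ f x (Pi.single i 1)

/-- The covariant fundamental metric tensor `Σ_{is'}(x,x') = ∂²Σ/∂xⁱ∂x'ˢ`. -/
noncomputable def Sig2 (n : ℕ) (W : (Fin n → ℝ) → (Fin n → ℝ) → ℝ)
    (x x' : Fin n → ℝ) : Matrix (Fin n) (Fin n) ℝ :=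
  Matrix.of fun i s => pd n i (fun z => pd n s (fun w => W z w) x') x

/-- The third derivative `Σ_{,kls'}(x,x') = ∂³Σ/∂xᵏ∂xˡ∂x'ˢ`. -/
noncomputable def Sig3 (n : ℕ) (W : (Fin n → ℝ) → (Fin n → ℝ) → ℝ)
    (x x' : Fin n → ℝ) (k l s : Fin n) : ℝ :=
  pd n k (fun z => pd n l (fun z2 => pd n s (fun w => W z2 w) x') z) x

/-- The Christoffel symbol `Γⁱ_{kl}(x,x') = Σ_s Σ^{is'} Σ_{,kls'}`, where `Σ^{is'}` is
the inverse of the fundamental metric tensor (`Σ_s Σ^{is'}Σ_{ls'} = δⁱₗ`). -/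
noncomputable def Gamma (n : ℕ) (W : (Fin n → ℝ) → (Fin n → ℝ) → ℝ)
    (x x' : Fin n → ℝ) (i k l : Fin n) : ℝ :=
  ∑ s : Fin n, ((Sig2 n W x x')ᵀ)⁻¹ i s * Sig3 n W x x' k l s

/-- The metric `H(x) = S(x)·c·S(x)ᵀ`, i.e. `H_{ik} = Σ_{ip'} c^{pq} Σ_{kq'}`, of the flat
space `Ẽ_{x'}` obtained by parallel transport of a constant symmetric tensor `c`. -/
noncomputable def Hmat (n : ℕ) (W : (Fin n → ℝ) → (Fin n → ℝ) → ℝ)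
    (x' : Fin n → ℝ) (c : Matrix (Fin n) (Fin n) ℝ) (x : Fin n → ℝ) :
    Matrix (Fin n) (Fin n) ℝ :=
  Sig2 n W x x' * c * (Sig2 n W x x')ᵀ

/-! ### Auxiliary lemmas -/

/-- The partial derivative in the second variable, as a function of the first variable. -/
noncomputable def gfun (n : ℕ) (W : (Fin n → ℝ) → (Fin n → ℝ) → ℝ) (x' : Fin n → ℝ)
    (s : Fin n) : (Fin n → ℝ) → ℝ :=
  fun z => pd n s (fun w => W z w) x'

lemma gfun_eq (n : ℕ) (W : (Fin n → ℝ) → (Fin n → ℝ) → ℝ)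
    (hreg : ContDiff ℝ 3 (fun p : (Fin n → ℝ) × (Fin n → ℝ) => W p.1 p.2))
    (x' : Fin n → ℝ) (s : Fin n) :
    gfun n W x' s = fun z =>
      (fderiv ℝ (fun p : (Fin n → ℝ) × (Fin n → ℝ) => W p.1 p.2) (z, x'))
        (0, Pi.single s 1) := by
  funext z
  have hW : DifferentiableAt ℝ (fun p : (Fin n → ℝ) × (Fin n → ℝ) => W p.1 p.2) (z, x') :=
    (hreg.differentiable (by norm_num)).differentiableAt
  have h1 : HasFDerivAt (fun w : Fin n → ℝ => W z w)
      ((fderiv ℝ (fun p : (Fin n → ℝ) × (Fin n → ℝ) => W p.1 p.2) (z, x')).comp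
        (ContinuousLinearMap.inr ℝ (Fin n → ℝ) (Fin n → ℝ))) x' :=
    hW.hasFDerivAt.comp x' (hasFDerivAt_prodMk_right z x')
  simp only [gfun, pd, h1.fderiv]
  rfl

lemma gfun_contDiff (n : ℕ) (W : (Fin n → ℝ) → (Fin n → ℝ) → ℝ)
    (hreg : ContDiff ℝ 3 (fun p : (Fin n → ℝ) × (Fin n → ℝ) => W p.1 p.2))
    (x' : Fin n → ℝ) (s : Fin n) : ContDiff ℝ 2 (gfun n W x' s) := by
  rw [gfun_eq n W hreg x' s]
  have h1 : ContDiff ℝ 2 (fderiv ℝ (fun p : (Fin n → ℝ) × (Fin n → ℝ) => W p.1 p.2)) :=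
    hreg.fderiv_right (by norm_num)
  exact (h1.comp (contDiff_id.prodMk contDiff_const)).clm_apply contDiff_const

lemma sig2_eq (n : ℕ) (W : (Fin n → ℝ) → (Fin n → ℝ) → ℝ) (x x' : Fin n → ℝ) (a b : Fin n) :
    Sig2 n W x x' a b = pd n a (gfun n W x' b) x := rfl

lemma sig3_eq (n : ℕ) (W : (Fin n → ℝ) → (Fin n → ℝ) → ℝ) (x x' : Fin n → ℝ) (k l s : Fin n) :
    Sig3 n W x x' k l s = pd n k (fun z => pd n l (gfun n W x' s) z) x := rfl

lemma pd_gfun_contDiff (n : ℕ) (W : (Fin n → ℝ) → (Fin n → ℝ) → ℝ)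
    (hreg : ContDiff ℝ 3 (fun p : (Fin n → ℝ) × (Fin n → ℝ) => W p.1 p.2))
    (x' : Fin n → ℝ) (a b : Fin n) :
    ContDiff ℝ 1 (fun z => pd n a (gfun n W x' b) z) := by
  have h1 : ContDiff ℝ 1 (fderiv ℝ (gfun n W x' b)) :=
    (gfun_contDiff n W hreg x' b).fderiv_right (by norm_num)
  exact h1.clm_apply contDiff_const

lemma pd_pd_gfun (n : ℕ) (W : (Fin n → ℝ) → (Fin n → ℝ) → ℝ)
    (hreg : ContDiff ℝ 3 (fun p : (Fin n → ℝ) × (Fin n → ℝ) => W p.1 p.2))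
    (x' x : Fin n → ℝ) (k l s : Fin n) :
    pd n k (fun z => pd n l (gfun n W x' s) z) x =
      fderiv ℝ (fderiv ℝ (gfun n W x' s)) x (Pi.single k 1) (Pi.single l 1) := by
  have hg := gfun_contDiff n W hreg x' s
  have hd : DifferentiableAt ℝ (fderiv ℝ (gfun n W x' s)) x :=
    ((hg.fderiv_right (by norm_num : (1:WithTop ℕ∞) + 1 ≤ 2)).differentiable
      one_ne_zero).differentiableAt
  have := fderiv_clm_apply hd (differentiableAt_const (Pi.single l 1 : Fin n → ℝ))
  simp only [pd, this]
  simp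

/-- Schwarz symmetry of the third derivative in the first two indices. -/
lemma sig3_symm (n : ℕ) (W : (Fin n → ℝ) → (Fin n → ℝ) → ℝ)
    (hreg : ContDiff ℝ 3 (fun p : (Fin n → ℝ) × (Fin n → ℝ) => W p.1 p.2))
    (x' x : Fin n → ℝ) (k l s : Fin n) :
    Sig3 n W x x' k l s = Sig3 n W x x' l k s := by
  rw [sig3_eq, sig3_eq, pd_pd_gfun n W hreg, pd_pd_gfun n W hreg]
  exact ((gfun_contDiff n W hreg x' s).contDiffAt.isSymmSndFDerivAt (by norm_num))
    (Pi.single k 1) (Pi.single l 1)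

lemma pd_sum {n : ℕ} {ι : Type*} (s : Finset ι) (F : ι → (Fin n → ℝ) → ℝ) (x : Fin n → ℝ)
    (h : ∀ i ∈ s, DifferentiableAt ℝ (F i) x) (l : Fin n) :
    pd n l (fun z => ∑ i ∈ s, F i z) x = ∑ i ∈ s, pd n l (F i) x := by
  simp only [pd, fderiv_fun_sum h]
  simp

lemma pd_mul3 {n : ℕ} {A B : (Fin n → ℝ) → ℝ} {x : Fin n → ℝ} (r : ℝ)
    (hA : DifferentiableAt ℝ A x) (hB : DifferentiableAt ℝ B x) (l : Fin n) :
    pd n l (fun z => A z * r * B z) x = pd n l A x * r * B x + A x * r * pd n l B x := by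
  simp only [pd, fderiv_fun_mul (hA.mul_const r) hB, fderiv_mul_const hA r]
  simp [smul_eq_mul]
  ring

lemma hmat_entry (n : ℕ) (W : (Fin n → ℝ) → (Fin n → ℝ) → ℝ) (x' : Fin n → ℝ)
    (c : Matrix (Fin n) (Fin n) ℝ) (z : Fin n → ℝ) (k m : Fin n) :
    Hmat n W x' c z k m =
      ∑ j : Fin n, ∑ p : Fin n,
        pd n k (gfun n W x' p) z * c p j * pd n m (gfun n W x' j) z := by
  simp only [Hmat, Matrix.mul_apply, Matrix.transpose_apply, Finset.sum_mul]
  rfl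

/-- Derivative of an entry of the transported metric. -/
lemma pd_H (n : ℕ) (W : (Fin n → ℝ) → (Fin n → ℝ) → ℝ)
    (hreg : ContDiff ℝ 3 (fun p : (Fin n → ℝ) × (Fin n → ℝ) => W p.1 p.2))
    (x' : Fin n → ℝ) (c : Matrix (Fin n) (Fin n) ℝ) (x : Fin n → ℝ) (k m l : Fin n) :
    pd n l (fun z => Hmat n W x' c z k m) x =
      ∑ j : Fin n, ∑ p : Fin n,
        (Sig3 n W x x' l k p * c p j * Sig2 n W x x' m j
          + Sig2 n W x x' k p * c p j * Sig3 n W x x' l m j) := by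
  have hdiff : ∀ a b : Fin n, DifferentiableAt ℝ (fun z => pd n a (gfun n W x' b) z) x :=
    fun a b => ((pd_gfun_contDiff n W hreg x' a b).differentiable one_ne_zero).differentiableAt
  have hfun : (fun z => Hmat n W x' c z k m) =
      fun z => ∑ j : Fin n, ∑ p : Fin n,
        pd n k (gfun n W x' p) z * c p j * pd n m (gfun n W x' j) z := by
    funext z; exact hmat_entry n W x' c z k m
  rw [hfun, pd_sum _ _ _ (fun j _ => DifferentiableAt.fun_sum
    (fun p _ => ((hdiff k p).mul_const (c p j)).fun_mul (hdiff m j)))]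
  refine Finset.sum_congr rfl fun j _ => ?_
  rw [pd_sum _ _ _ (fun p _ => ((hdiff k p).mul_const (c p j)).fun_mul (hdiff m j))]
  refine Finset.sum_congr rfl fun p _ => ?_
  rw [pd_mul3 (c p j) (hdiff k p) (hdiff m j)]
  rfl

lemma triple_swap {n : ℕ} (f : Fin n → Fin n → Fin n → ℝ) :
    ∑ s : Fin n, ∑ j : Fin n, ∑ m : Fin n, f s j m
      = ∑ m : Fin n, ∑ j : Fin n, ∑ s : Fin n, f s j m := by
  calc ∑ s : Fin n, ∑ j : Fin n, ∑ m : Fin n, f s j m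
      = ∑ s : Fin n, ∑ m : Fin n, ∑ j : Fin n, f s j m :=
        Finset.sum_congr rfl fun s _ => Finset.sum_comm
    _ = ∑ m : Fin n, ∑ s : Fin n, ∑ j : Fin n, f s j m := Finset.sum_comm
    _ = ∑ m : Fin n, ∑ j : Fin n, ∑ s : Fin n, f s j m :=
        Finset.sum_congr rfl fun m _ => Finset.sum_comm

/-- The tensor `G̃_{(x')ik} = Σ_{ip'} g̃^{p'q'} Σ_{kq'}` is a symmetric invertible metric
solving the Christoffel system: the two-point Christoffel symbol `Γⁱ_{kl}(x,x')`
coincides with the Levi-Civita Christoffel symbol of the metric `H`. -/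
theorem christoffel_is_levi_civita_of_transported_metric
    (n : ℕ) (W : (Fin n → ℝ) → (Fin n → ℝ) → ℝ)
    (hreg : ContDiff ℝ 3 (fun p : (Fin n → ℝ) × (Fin n → ℝ) => W p.1 p.2))
    (x' : Fin n → ℝ)
    (hinv : ∀ x : Fin n → ℝ, IsUnit (Sig2 n W x x').det)
    (c : Matrix (Fin n) (Fin n) ℝ) (hcsym : c.IsSymm) (hcinv : IsUnit c.det) :
    ∀ x : Fin n → ℝ,
      (Hmat n W x' c x).IsSymm ∧ IsUnit (Hmat n W x' c x).det ∧
      ∀ i k l : Fin n,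
        Gamma n W x x' i k l =
          (1 / 2) * ∑ m : Fin n, (Hmat n W x' c x)⁻¹ i m *
            (pd n l (fun z => Hmat n W x' c z k m) x
              + pd n k (fun z => Hmat n W x' c z l m) x
              - pd n m (fun z => Hmat n W x' c z k l) x) := by
  intro x
  have hsym : (Hmat n W x' c x).IsSymm := by
    show (Hmat n W x' c x)ᵀ = Hmat n W x' c x
    show (Sig2 n W x x' * c * (Sig2 n W x x')ᵀ)ᵀ = Sig2 n W x x' * c * (Sig2 n W x x')ᵀ
    rw [Matrix.transpose_mul, Matrix.transpose_mul, Matrix.transpose_transpose, hcsym.eq,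
      Matrix.mul_assoc]
  have hdet : IsUnit (Hmat n W x' c x).det := by
    have : (Hmat n W x' c x).det = (Sig2 n W x x').det * c.det * (Sig2 n W x x').det := by
      simp [Hmat, Matrix.det_mul, Matrix.det_transpose]
    rw [this]
    exact ((hinv x).mul hcinv).mul (hinv x)
  refine ⟨hsym, hdet, ?_⟩
  intro i k l
  have h3 : ∀ a b p : Fin n, Sig3 n W x x' a b p = Sig3 n W x x' b a p :=
    fun a b p => sig3_symm n W hreg x' x a b p
  -- the bracket simplifies
  have split : ∀ F G : Fin n → Fin n → ℝ,
      (∑ j : Fin n, ∑ p : Fin n, (F j p + G j p))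
        = (∑ j : Fin n, ∑ p : Fin n, F j p) + (∑ j : Fin n, ∑ p : Fin n, G j p) := by
    intro F G; simp [Finset.sum_add_distrib]
  have hbr : ∀ m : Fin n,
      pd n l (fun z => Hmat n W x' c z k m) x + pd n k (fun z => Hmat n W x' c z l m) x
        - pd n m (fun z => Hmat n W x' c z k l) x
      = 2 * ∑ j : Fin n, ∑ p : Fin n,
          Sig3 n W x x' k l p * c p j * Sig2 n W x x' m j := by
    intro m
    rw [pd_H n W hreg x' c x k m l, pd_H n W hreg x' c x l m k, pd_H n W hreg x' c x k l m]
    rw [split, split, split]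
    have e1 : (∑ j : Fin n, ∑ p : Fin n, Sig3 n W x x' l k p * c p j * Sig2 n W x x' m j)
        = ∑ j : Fin n, ∑ p : Fin n, Sig3 n W x x' k l p * c p j * Sig2 n W x x' m j :=
      Finset.sum_congr rfl fun j _ => Finset.sum_congr rfl fun p _ => by rw [h3 l k]
    have e2 : (∑ j : Fin n, ∑ p : Fin n, Sig2 n W x x' k p * c p j * Sig3 n W x x' l m j)
        = ∑ j : Fin n, ∑ p : Fin n, Sig2 n W x x' k p * c p j * Sig3 n W x x' m l j :=
      Finset.sum_congr rfl fun j _ => Finset.sum_congr rfl fun p _ => by rw [h3 l m]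
    have e5 : (∑ j : Fin n, ∑ p : Fin n, Sig3 n W x x' m k p * c p j * Sig2 n W x x' l j)
        = ∑ j : Fin n, ∑ p : Fin n, Sig2 n W x x' l p * c p j * Sig3 n W x x' k m j := by
      rw [Finset.sum_comm]
      refine Finset.sum_congr rfl fun a _ => Finset.sum_congr rfl fun b _ => ?_
      rw [h3 m k, hcsym.apply b a]
      ring
    rw [e1, e2, e5]
    ring
  have hsum : (∑ m : Fin n, (Hmat n W x' c x)⁻¹ i m *
      (pd n l (fun z => Hmat n W x' c z k m) x + pd n k (fun z => Hmat n W x' c z l m) x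
        - pd n m (fun z => Hmat n W x' c z k l) x))
      = ∑ m : Fin n, (Hmat n W x' c x)⁻¹ i m *
          (2 * ∑ j : Fin n, ∑ p : Fin n,
            Sig3 n W x x' k l p * c p j * Sig2 n W x x' m j) :=
    Finset.sum_congr rfl fun m _ => by rw [hbr m]
  rw [hsum]
  -- matrix inverse identities
  have hHS : (Hmat n W x' c x)⁻¹ * Sig2 n W x x' = ((Sig2 n W x x')ᵀ)⁻¹ * c⁻¹ := by
    show (Sig2 n W x x' * c * (Sig2 n W x x')ᵀ)⁻¹ * Sig2 n W x x' = _
    rw [Matrix.mul_inv_rev, Matrix.mul_inv_rev, Matrix.mul_assoc, Matrix.mul_assoc,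
      Matrix.nonsing_inv_mul _ (hinv x), Matrix.mul_one]
  have hSti : ((Sig2 n W x x')ᵀ)⁻¹ = (Hmat n W x' c x)⁻¹ * Sig2 n W x x' * c := by
    rw [hHS, Matrix.mul_assoc, Matrix.nonsing_inv_mul c hcinv, Matrix.mul_one]
  have hentry : ∀ s : Fin n, ((Sig2 n W x x')ᵀ)⁻¹ i s
      = ∑ j : Fin n, (∑ m : Fin n, (Hmat n W x' c x)⁻¹ i m * Sig2 n W x x' m j) * c j s := by
    intro s
    conv_lhs => rw [hSti]
    rw [Matrix.mul_apply]
    exact Finset.sum_congr rfl fun j _ => by rw [Matrix.mul_apply]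
  have hG : Gamma n W x x' i k l
      = ∑ s : Fin n, (∑ j : Fin n, (∑ m : Fin n,
          (Hmat n W x' c x)⁻¹ i m * Sig2 n W x x' m j) * c j s) * Sig3 n W x x' k l s :=
    Finset.sum_congr rfl fun s _ => by rw [hentry s]
  rw [hG]
  simp only [Finset.sum_mul, Finset.mul_sum]
  rw [triple_swap]
  refine Finset.sum_congr rfl fun m _ => Finset.sum_congr rfl fun j _ =>
    Finset.sum_congr rfl fun s _ => ?_
  rw [hcsym.apply s j]
  ring
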